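/- Let d, Q ≥ 1 be integers and let r ≥ Q be an integer. Then for all integers 1 ≤ i ≤ j ≤ Q, the set S = σ_i ∪ σ_{i+1} ∪ … ∪ σ_j satisfies dens_{T_r}(S) = dens_{T_{r−Q}}(S) + (2^d − 1)/d. -/

import Mathlib

/-- The block `σ_i = {id+1, id+2, …, (i+1)d}` of vertices. -/
def sigmaB (d i : ℕ) : Finset ℕ := Finset.Icc (i * d + 1) ((i + 1) * d)

/-- The `d`-tree `T_0` on vertex set `{1, …, d(Q+1)}`: its simplices are the nonempty
subsets `σ` with `max σ − min σ ≤ d` (equivalently, `a ≤ b + d` for all `a, b ∈ σ`). -/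
def T0 (d Q : ℕ) : Finset (Finset ℕ) :=
  (Finset.Icc 1 (d * (Q + 1))).powerset.filter
    (fun σ => σ.Nonempty ∧ ∀ a ∈ σ, ∀ b ∈ σ, a ≤ b + d)

/-- The `k`-th attached root vertex (for `k = 0, 1, …`): a fresh vertex label. -/
def rootVtx (d Q k : ℕ) : ℕ := d * (Q + 1) + k + 1

/-- The index of the block to which the `k`-th root vertex is attached in `T_r`
(`k = 0, …, r−1`).  Writing `r = aQ + b` with `b = r % Q`, the first `b` vertices are
attached to `σ_{⌈Q/b⌉}, σ_{⌈2Q/b⌉}, …, σ_{⌈bQ/b⌉} = σ_Q` (coming from the base case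
`T_b`), and the remaining `aQ` vertices are attached cyclically to `σ_1, …, σ_Q`
(`a` full rounds), corresponding to the recursion `T_r = T_{r−Q} + (σ_1, …, σ_Q)`. -/
def target (Q r k : ℕ) : ℕ :=
  if k < r % Q then ((k + 1) * Q + (r % Q) - 1) / (r % Q)
  else (k - r % Q) % Q + 1

/-- The rooted `d`-tree `T_r`: the complex `T_0` together with, for each `k < r`, the
root vertex `rootVtx d Q k` attached to the `(d−1)`-simplex `σ_{target Q r k}`
(attaching adds all sets `τ ∪ {v}` for `τ ⊆ σ`). -/
def Tr (d Q r : ℕ) : Finset (Finset ℕ) :=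
  T0 d Q ∪ (Finset.range r).biUnion
    (fun k => (sigmaB d (target Q r k)).powerset.image (insert (rootVtx d Q k)))

/-- The set of vertex roots of `T_r`. -/
def rootSet (d Q r : ℕ) : Finset ℕ := (Finset.range r).image (rootVtx d Q)

/-- `e_C(S)`: the number of nonempty simplices of `C` with at least one vertex in `S`. -/
def eCount (C : Finset (Finset ℕ)) (S : Finset ℕ) : ℕ :=
  (C.filter (fun σ => σ.Nonempty ∧ (σ ∩ S).Nonempty)).card

/-- The density `dens_C(S) = e_C(S)/|S|`. -/
noncomputable def dens (C : Finset (Finset ℕ)) (S : Finset ℕ) : ℝ :=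
  (eCount C S : ℝ) / (S.card : ℝ)

/-- The vertex set of a complex. -/
def verts (C : Finset (Finset ℕ)) : Finset ℕ := C.sup id

/-- The unrooted vertices of `T_r`: all vertices except the simplex root `σ_0` and the
vertex roots. -/
def unrooted (d Q r : ℕ) : Finset ℕ :=
  verts (Tr d Q r) \ (sigmaB d 0 ∪ rootSet d Q r)

/-!
The last `Q` vertex roots of `T_r` are attached to `σ_1, …, σ_Q`, one to each, and all other
attachments agree with those of `T_{r-Q}`.  A new root lies outside `S`, so the simplices of
the cone over `σ_t` meeting `S` are exactly its nonempty faces when `σ_t ⊆ S` (there are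
`2^d - 1` of them) and none otherwise.  Hence `e(S)` grows by `(2^d - 1)` for each of the
`|S| / d` blocks of `S`.
-/

open Finset Function

/-- The simplices created by attaching a vertex `v` to the simplex `A`. -/
def cone (v : ℕ) (A : Finset ℕ) : Finset (Finset ℕ) := A.powerset.image (insert v)

lemma mem_cone {v : ℕ} {A σ : Finset ℕ} : σ ∈ cone v A ↔ v ∈ σ ∧ σ ⊆ insert v A := by
  constructor
  · intro hσ
    obtain ⟨τ, hτ, rfl⟩ := mem_image.mp hσ
    exact ⟨mem_insert_self v τ, insert_subset_insert v (mem_powerset.mp hτ)⟩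
  · rintro ⟨hv, hσ⟩
    exact mem_image.mpr ⟨σ.erase v, mem_powerset.mpr (subset_insert_iff.mp hσ), insert_erase hv⟩

section eCount

variable {C D : Finset (Finset ℕ)} {S : Finset ℕ}

lemma eCount_union (h : Disjoint C D) : eCount (C ∪ D) S = eCount C S + eCount D S := by
  rw [eCount, filter_union, card_union_of_disjoint (disjoint_filter_filter h)]
  rfl

lemma eCount_biUnion {ι : Type*} {s : Finset ι} {F : ι → Finset (Finset ℕ)}
    (h : (s : Set ι).PairwiseDisjoint F) :
    eCount (s.biUnion F) S = ∑ k ∈ s, eCount (F k) S := by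
  rw [eCount, filter_biUnion, card_biUnion]
  · rfl
  · exact fun k hk l hl hkl => disjoint_filter_filter (h hk hl hkl)

lemma eCount_cone {v : ℕ} {A : Finset ℕ} (hvA : v ∉ A) (hvS : v ∉ S) :
    eCount (cone v A) S = #{τ ∈ A.powerset | (τ ∩ S).Nonempty} := by
  have hinj : Set.InjOn (insert v) (A.powerset : Set (Finset ℕ)) := fun τ hτ τ' hτ' h => by
    simpa [erase_insert (fun hv => hvA (mem_powerset.mp hτ hv)),
      erase_insert (fun hv => hvA (mem_powerset.mp hτ' hv))] using congrArg (erase · v) h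
  rw [eCount, cone, filter_image, card_image_of_injOn (hinj.mono (filter_subset _ _))]
  congr 1
  refine filter_congr fun τ _ => ?_
  simp [insert_inter_of_notMem hvS]

lemma eCount_cone_of_subset {v : ℕ} {A : Finset ℕ} (hvA : v ∉ A) (hvS : v ∉ S)
    (hAS : A ⊆ S) : eCount (cone v A) S = 2 ^ #A - 1 := by
  have : {τ ∈ A.powerset | (τ ∩ S).Nonempty} = A.powerset.erase ∅ := by
    rw [← filter_ne']
    refine filter_congr fun τ hτ => ?_
    rw [inter_eq_left.mpr ((mem_powerset.mp hτ).trans hAS), nonempty_iff_ne_empty]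
  rw [eCount_cone hvA hvS, this, card_erase_of_mem (empty_mem_powerset A), card_powerset]

lemma eCount_cone_of_disjoint {v : ℕ} {A : Finset ℕ} (hvA : v ∉ A) (hvS : v ∉ S)
    (hAS : Disjoint A S) : eCount (cone v A) S = 0 := by
  rw [eCount_cone hvA hvS, card_eq_zero, filter_eq_empty_iff]
  intro τ hτ
  rw [not_nonempty_iff_eq_empty, ← disjoint_iff_inter_eq_empty]
  exact hAS.mono_left (mem_powerset.mp hτ)

end eCount

section Blocks

variable {d : ℕ}

lemma card_sigmaB (d t : ℕ) : #(sigmaB d t) = d := by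
  simp [sigmaB, add_mul]

lemma pairwise_disjoint_sigmaB : Pairwise (Disjoint on sigmaB d) := by
  intro s t hst
  rw [Function.onFun, disjoint_left]
  intro x hxs hxt
  simp only [sigmaB, mem_Icc] at hxs hxt
  rcases Nat.lt_or_gt_of_ne hst with h | h
  · have := Nat.mul_le_mul_right d (show s + 1 ≤ t from h)
    omega
  · have := Nat.mul_le_mul_right d (show t + 1 ≤ s from h)
    omega

lemma le_of_mem_sigmaB {Q t x : ℕ} (ht : t ≤ Q) (hx : x ∈ sigmaB d t) : x ≤ d * (Q + 1) := by
  have := Nat.mul_le_mul_right d (Nat.succ_le_succ ht)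
  simp only [sigmaB, mem_Icc] at hx
  linarith

lemma card_biUnion_sigmaB (s : Finset ℕ) : #(s.biUnion (sigmaB d)) = #s * d := by
  rw [card_biUnion (pairwise_disjoint_sigmaB.set_pairwise _)]
  simp [card_sigmaB, sum_const]

lemma disjoint_sigmaB_biUnion {s : Finset ℕ} {t : ℕ} (ht : t ∉ s) :
    Disjoint (sigmaB d t) (s.biUnion (sigmaB d)) :=
  (disjoint_biUnion_right _ _ _).mpr fun _ hu => pairwise_disjoint_sigmaB fun htu => ht (htu ▸ hu)

end Blocks

section Targets

variable {Q r : ℕ}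

lemma target_sub_self (hr : Q ≤ r) (k : ℕ) : target Q (r - Q) k = target Q r k := by
  rw [target, target, ← Nat.mod_eq_sub_mod hr]

lemma target_le (hQ : 0 < Q) (r k : ℕ) : target Q r k ≤ Q := by
  unfold target
  split_ifs with hk
  · have hb : 0 < r % Q := by omega
    have : (k + 1) * Q ≤ Q * (r % Q) := by nlinarith
    exact Nat.lt_succ_iff.mp ((Nat.div_lt_iff_lt_mul hb).mpr (by rw [Nat.succ_mul Q]; omega))
  · have := Nat.mod_lt (k - r % Q) hQ
    omega

lemma target_of_mod_le {k : ℕ} (hk : r % Q ≤ k) : target Q r k = (k - r % Q) % Q + 1 := by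
  rw [target, if_neg (not_lt.mpr hk)]

/-- The last `Q` roots are attached to `σ_1, …, σ_Q`: their indices, shifted by `r % Q`,
run through `Q` consecutive integers, hence through all residues mod `Q`. -/
lemma image_target_Ico (hr : Q ≤ r) : (Ico (r - Q) r).image (target Q r) = Icc 1 Q := by
  have hb : r % Q ≤ r - Q := Nat.mod_eq_sub_mod hr ▸ Nat.mod_le _ _
  have hcongr : (Ico (r - Q) r).image (target Q r) =
      (((Ico (r - Q) r).image (· - r % Q)).image (· % Q)).image (· + 1) := by
    rw [image_image, image_image]
    exact image_congr fun k hk => target_of_mod_le (hb.trans (mem_Ico.mp hk).1)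
  have hr' : r - r % Q = r - Q - r % Q + Q := by omega
  rw [hcongr, Nat.image_sub_const_Ico hb, hr', Nat.image_Ico_mod, range_eq_Ico,
    image_add_right_Ico, zero_add, Ico_add_one_right_eq_Icc]

end Targets

def rootCone (d Q r k : ℕ) : Finset (Finset ℕ) :=
  cone (rootVtx d Q k) (sigmaB d (target Q r k))

section Tree

variable {d Q r : ℕ}

lemma Tr_eq_union (hr : Q ≤ r) :
    Tr d Q r = Tr d Q (r - Q) ∪ (Ico (r - Q) r).biUnion (rootCone d Q r) := by
  have hcones : (range (r - Q)).biUnion (rootCone d Q (r - Q)) =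
      (range (r - Q)).biUnion (rootCone d Q r) :=
    biUnion_congr rfl fun k _ => by rw [rootCone, rootCone, target_sub_self hr]
  have hsplit : range r = range (r - Q) ∪ Ico (r - Q) r := by
    rw [range_eq_Ico, range_eq_Ico, Ico_union_Ico_eq_Ico (Nat.zero_le _) (Nat.sub_le r Q)]
  change T0 d Q ∪ (range r).biUnion (rootCone d Q r) =
    (T0 d Q ∪ (range (r - Q)).biUnion (rootCone d Q (r - Q))) ∪ _
  rw [hcones, hsplit, union_biUnion, union_assoc]

lemma mem_rootCone_le {k x : ℕ} {σ : Finset ℕ} (hQ : 0 < Q) (hσ : σ ∈ rootCone d Q r k)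
    (hx : x ∈ σ) : x = rootVtx d Q k ∨ x ≤ d * (Q + 1) := by
  rcases mem_insert.mp ((mem_cone.mp hσ).2 hx) with h | h
  · exact Or.inl h
  · exact Or.inr (le_of_mem_sigmaB (target_le hQ r k) h)

lemma le_of_mem_Tr {s x : ℕ} {σ : Finset ℕ} (hQ : 0 < Q) (hσ : σ ∈ Tr d Q s) (hx : x ∈ σ) :
    x ≤ d * (Q + 1) + s := by
  rcases mem_union.mp hσ with h | h
  · have := (mem_powerset.mp (mem_filter.mp h).1) hx
    simp only [mem_Icc] at this
    omega
  · obtain ⟨k, hk, hσk⟩ := mem_biUnion.mp h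
    have := mem_range.mp hk
    rcases mem_rootCone_le hQ hσk hx with rfl | h
    · simp only [rootVtx]
      omega
    · omega

lemma disjoint_Tr_rootCone {s k : ℕ} (hQ : 0 < Q) (hk : s ≤ k) :
    Disjoint (Tr d Q s) (rootCone d Q r k) := by
  rw [disjoint_right]
  intro σ hσ hσ'
  have := le_of_mem_Tr hQ hσ' (mem_cone.mp hσ).1
  simp only [rootVtx] at this
  omega

lemma pairwise_disjoint_rootCone (hQ : 0 < Q) : Pairwise (Disjoint on rootCone d Q r) := by
  intro k l hkl
  rw [Function.onFun, disjoint_left]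
  intro σ hσk hσl
  rcases mem_rootCone_le hQ hσl (mem_cone.mp hσk).1 with h | h <;>
    simp only [rootVtx] at h <;> omega

lemma eCount_rootCone {k : ℕ} {s : Finset ℕ} (hQ : 0 < Q) (hs : s ⊆ Icc 1 Q) :
    eCount (rootCone d Q r k) (s.biUnion (sigmaB d)) =
      if target Q r k ∈ s then 2 ^ d - 1 else 0 := by
  have hroot : ∀ t ≤ Q, rootVtx d Q k ∉ sigmaB d t := fun t ht h => by
    have := le_of_mem_sigmaB ht h
    simp only [rootVtx] at this
    omega
  have hvS : rootVtx d Q k ∉ s.biUnion (sigmaB d) := by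
    simp only [mem_biUnion, not_exists, not_and]
    exact fun t ht => hroot t (mem_Icc.mp (hs ht)).2
  have hvA := hroot _ (target_le hQ r k)
  split_ifs with ht
  · rw [rootCone, eCount_cone_of_subset hvA hvS (subset_biUnion_of_mem _ ht), card_sigmaB]
  · exact eCount_cone_of_disjoint hvA hvS (disjoint_sigmaB_biUnion ht)

theorem eCount_Tr {s : Finset ℕ} (hQ : 0 < Q) (hr : Q ≤ r) (hs : s ⊆ Icc 1 Q) :
    eCount (Tr d Q r) (s.biUnion (sigmaB d)) =
      eCount (Tr d Q (r - Q)) (s.biUnion (sigmaB d)) + #s * (2 ^ d - 1) := by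
  have hinj : Set.InjOn (target Q r) (Ico (r - Q) r : Set ℕ) := by
    rw [← card_image_iff, image_target_Ico hr, Nat.card_Icc, Nat.card_Ico]
    omega
  rw [Tr_eq_union hr, eCount_union ((disjoint_biUnion_right _ _ _).mpr fun k hk =>
      disjoint_Tr_rootCone hQ (mem_Ico.mp hk).1),
    eCount_biUnion ((pairwise_disjoint_rootCone hQ).set_pairwise _)]
  simp_rw [eCount_rootCone hQ hs]
  rw [← sum_image (f := fun t => if t ∈ s then 2 ^ d - 1 else 0) hinj, image_target_Ico hr,
    sum_ite_mem, inter_eq_right.mpr hs, sum_const, smul_eq_mul]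

theorem dens_Tr {s : Finset ℕ} (hr : Q ≤ r) (hs : s ⊆ Icc 1 Q) (hne : s.Nonempty) :
    dens (Tr d Q r) (s.biUnion (sigmaB d)) =
      dens (Tr d Q (r - Q)) (s.biUnion (sigmaB d)) + ((2 : ℝ) ^ d - 1) / d := by
  obtain ⟨t, ht⟩ := hne
  have hQ : 0 < Q := by
    have := mem_Icc.mp (hs ht)
    omega
  have hcard : (#s : ℝ) ≠ 0 := Nat.cast_ne_zero.mpr (card_ne_zero_of_mem ht)
  rw [_root_.dens, _root_.dens, eCount_Tr hQ hr hs, card_biUnion_sigmaB, Nat.cast_add, add_div,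
    Nat.cast_mul, Nat.cast_mul, Nat.cast_sub Nat.one_le_two_pow, mul_div_mul_left _ _ hcard]
  norm_num

end Tree

theorem Tr_density_recursion_general (d Q r : ℕ) (hr : Q ≤ r)
    (i j : ℕ) (hi : 1 ≤ i) (hij : i ≤ j) (hjQ : j ≤ Q) :
    dens (Tr d Q r) ((Finset.Icc i j).biUnion (sigmaB d)) =
      dens (Tr d Q (r - Q)) ((Finset.Icc i j).biUnion (sigmaB d)) +
        ((2 : ℝ) ^ d - 1) / (d : ℝ) :=
  dens_Tr hr (Icc_subset_Icc hi hjQ) (nonempty_Icc.mpr hij)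

/-- **Density recursion.** Let `d, Q ≥ 1` and `r ≥ Q`.  For all `1 ≤ i ≤ j ≤ Q`, the
set `S = σ_i ∪ σ_{i+1} ∪ … ∪ σ_j` satisfies
`dens_{T_r}(S) = dens_{T_{r−Q}}(S) + (2^d − 1)/d`. -/
theorem Tr_density_recursion (d Q r : ℕ) (hd : 1 ≤ d) (hQ : 1 ≤ Q) (hr : Q ≤ r)
    (i j : ℕ) (hi : 1 ≤ i) (hij : i ≤ j) (hjQ : j ≤ Q) :
    dens (Tr d Q r) ((Finset.Icc i j).biUnion (sigmaB d)) =
      dens (Tr d Q (r - Q)) ((Finset.Icc i j).biUnion (sigmaB d)) +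
        ((2 : ℝ) ^ d - 1) / (d : ℝ) :=
  Tr_density_recursion_general d Q r hr i j hi hij hjQ
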